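/- Let E be a complex vector space, let F, G : ℕ → E be finitely supported families of vectors, and let H ∈ E. Consider ψ' = Σ_{m ≥ 1} (x^m ⊗ F(m) + y^m ⊗ G(m)) + 1 ⊗ H in ℂ[x,y] ⊗ E. If ψ' has zero probability of a photon in the |−⟩ mode, then ψ' = (x + y) ⊗ F(1) + 1 ⊗ H; i.e., ψ' is a superposition of a single photon in the |+⟩ mode (tensored with the single auxiliary vector F(1)) and vacuum (tensored with H). -/

import Mathlib

/-!
The Hadamard substitution sends `x ^ m` and `y ^ m` to `2 ^ (-m/2) (u ∓ v) ^ m`, whose coefficient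
of `u ^ j v ^ k` (`j + k = m`) is `2 ^ (-m/2) (m choose j) (∓1) ^ k`. Hence the `E`-coefficient of
`u ^ j v ^ k` in the image of `ψ'` is a nonzero multiple of `(-1) ^ k • F n + G n` with `n = j + k`.
Its vanishing for `k = 1` gives `G n = F n` for `n ≥ 1`, and then for `k = 2` gives `2 • F n = 0`
for `n ≥ 2`.
-/

open MvPolynomial TensorProduct

/-- The `E`-coefficient of the monomial `X 0 ^ j * X 1 ^ k` of an element of
`ℂ[X 0, X 1] ⊗[ℂ] E`. -/
noncomputable def Ecoeff (E : Type*) [AddCommGroup E] [Module ℂ E] (j k : ℕ) :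
    MvPolynomial (Fin 2) ℂ ⊗[ℂ] E →ₗ[ℂ] E :=
  TensorProduct.lift
    ((LinearMap.lsmul ℂ E).comp
      (MvPolynomial.lcoeff ℂ (Finsupp.single 0 j + Finsupp.single 1 k)))

/-- The Hadamard mode change: the `ℂ`-algebra substitution `x ↦ (u − v)/√2`,
`y ↦ (u + v)/√2`, where `x = X 0`, `y = X 1` in the source and `u = X 0`,
`v = X 1` in the target. -/
noncomputable def hadamard : MvPolynomial (Fin 2) ℂ →ₐ[ℂ] MvPolynomial (Fin 2) ℂ :=
  MvPolynomial.aeval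
    ![((Real.sqrt 2 : ℂ))⁻¹ • ((X 0 : MvPolynomial (Fin 2) ℂ) - X 1),
      ((Real.sqrt 2 : ℂ))⁻¹ • ((X 0 : MvPolynomial (Fin 2) ℂ) + X 1)]

/-- `ψ` has zero probability of a photon in the `|−⟩` mode: for every `(j,k)`
with `k ≥ 1`, the `E`-coefficient of `u^j v^k` in `(h ⊗ id) ψ` is zero. -/
def NoMinusPhoton {E : Type*} [AddCommGroup E] [Module ℂ E]
    (ψ : MvPolynomial (Fin 2) ℂ ⊗[ℂ] E) : Prop :=
  ∀ j k : ℕ, 1 ≤ k → Ecoeff E j k (LinearMap.rTensor E hadamard.toLinearMap ψ) = 0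

theorem finsum_mem_eq_single {α M : Type*} [AddCommMonoid M] {s : Set α} {f : α → M} {a : α}
    (ha : a ∈ s) (hf : ∀ x ∈ s, x ≠ a → f x = 0) : ∑ᶠ x ∈ s, f x = f a := by
  rw [finsum_mem_eq_sum_of_inter_support_eq f (t := {a}), Finset.sum_singleton]
  ext x
  by_cases hx : x = a
  · simp [hx, ha]
  · simp +contextual [hx, hf x]

theorem Finsupp.single_zero_add_single_one_eq_iff {a b j k : ℕ} :
    Finsupp.single (0 : Fin 2) a + Finsupp.single 1 b = Finsupp.single 0 j + Finsupp.single 1 k ↔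
      (a, b) = (j, k) := by
  refine ⟨fun h => ?_, fun h => by simp_all⟩
  have h0 := DFunLike.congr_fun h 0
  have h1 := DFunLike.congr_fun h 1
  simp only [Finsupp.add_apply, Finsupp.single_apply] at h0 h1
  simp_all

namespace MvPolynomial

variable {R : Type*} [CommSemiring R]

theorem coeff_C_mul_X_zero_add_C_mul_X_one_pow (r c : R) (m j k : ℕ) :
    coeff (Finsupp.single 0 j + Finsupp.single 1 k)
        ((C r * (X 0 + C c * X 1) : MvPolynomial (Fin 2) R) ^ m)
      = if j + k = m then r ^ m * m.choose j * c ^ k else 0 := by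
  have hterm (a b : ℕ) : (X 0 : MvPolynomial (Fin 2) R) ^ a * (C c * X 1) ^ b =
      monomial (Finsupp.single 0 a + Finsupp.single 1 b) (c ^ b) := by
    rw [mul_pow, ← C_pow, X_pow_eq_monomial, X_pow_eq_monomial, C_mul_monomial, monomial_mul]
    simp
  rw [mul_pow, ← C_pow, coeff_C_mul, (Commute.all (X 0 : MvPolynomial (Fin 2) R) _).add_pow']
  simp only [coeff_sum, nsmul_eq_mul, ← map_natCast (C : R →+* _), coeff_C_mul, hterm,
    coeff_monomial, Finsupp.single_zero_add_single_one_eq_iff, Prod.mk.eta, mul_ite, mul_zero,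
    Finset.sum_ite_eq', Finset.HasAntidiagonal.mem_antidiagonal, mul_assoc]

end MvPolynomial

theorem hadamard_X_zero :
    hadamard (X 0) = C ((Real.sqrt 2 : ℂ))⁻¹ * (X 0 + C (-1) * X 1) := by
  simp [hadamard, smul_eq_C_mul, sub_eq_add_neg, mul_add]

theorem hadamard_X_one :
    hadamard (X 1) = C ((Real.sqrt 2 : ℂ))⁻¹ * (X 0 + C 1 * X 1) := by
  simp [hadamard, smul_eq_C_mul, mul_add]

section Ecoeff

variable {E : Type*} [AddCommGroup E] [Module ℂ E]

theorem Ecoeff_tmul (j k : ℕ) (p : MvPolynomial (Fin 2) ℂ) (e : E) :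
    Ecoeff E j k (p ⊗ₜ e) = coeff (Finsupp.single 0 j + Finsupp.single 1 k) p • e := by
  simp [Ecoeff]

theorem Ecoeff_rTensor_finsum_tmul_pow (φ : MvPolynomial (Fin 2) ℂ →ₐ[ℂ] MvPolynomial (Fin 2) ℂ)
    {q : MvPolynomial (Fin 2) ℂ} {r c : ℂ} (hq : φ q = C r * (X 0 + C c * X 1))
    (F : ℕ → E) (hF : (Function.support F).Finite) {j k : ℕ} (hjk : 1 ≤ j + k) :
    Ecoeff E j k (LinearMap.rTensor E φ.toLinearMap (∑ᶠ m ∈ Set.Ici 1, (q ^ m) ⊗ₜ[ℂ] F m))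
      = (r ^ (j + k) * (j + k).choose j * c ^ k) • F (j + k) := by
  let g := (Ecoeff E j k ∘ₗ LinearMap.rTensor E φ.toLinearMap).toAddMonoidHom
  have hsupp : (Set.Ici 1 ∩ Function.support fun m => (q ^ m) ⊗ₜ[ℂ] F m).Finite :=
    hF.subset fun m hm => fun hFm => hm.2 (by simp [hFm])
  change g _ = _
  rw [g.map_finsum_mem' hsupp]
  simp only [g, LinearMap.toAddMonoidHom_coe, LinearMap.coe_comp, Function.comp_apply,
    LinearMap.rTensor_tmul, AlgHom.toLinearMap_apply, map_pow, hq, Ecoeff_tmul,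
    MvPolynomial.coeff_C_mul_X_zero_add_C_mul_X_one_pow, ite_smul, zero_smul]
  rw [finsum_mem_eq_single (Set.mem_Ici.2 hjk) fun m _ hm => if_neg (Ne.symm hm), if_pos rfl]

end Ecoeff

theorem finsum_mem_Ici_one_tmul_of_eq_zero {R M N : Type*} [CommSemiring R] [AddCommMonoid M]
    [AddCommMonoid N] [Module R M] [Module R N] (p : ℕ → M) {F : ℕ → N}
    (hF : ∀ m, 2 ≤ m → F m = 0) : ∑ᶠ m ∈ Set.Ici 1, p m ⊗ₜ[R] F m = p 1 ⊗ₜ[R] F 1 :=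
  finsum_mem_eq_single (Set.mem_Ici.2 le_rfl) fun m (hm : 1 ≤ m) hne => by
    rw [hF m (by omega), tmul_zero]

section NegOnePowRelation

variable {V : Type*} [AddCommGroup V] [Module ℂ V] {F G : ℕ → V}

theorem eq_of_forall_neg_one_pow_smul_add_eq_zero
    (h : ∀ j k : ℕ, 1 ≤ k → ((-1 : ℂ) ^ k) • F (j + k) + G (j + k) = 0) {n : ℕ} (hn : 1 ≤ n) :
    G n = F n := by
  have h1 := h (n - 1) 1 le_rfl
  rwa [Nat.sub_add_cancel hn, pow_one, neg_one_smul, neg_add_eq_zero, eq_comm] at h1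

theorem eq_zero_of_forall_neg_one_pow_smul_add_eq_zero
    (h : ∀ j k : ℕ, 1 ≤ k → ((-1 : ℂ) ^ k) • F (j + k) + G (j + k) = 0) {n : ℕ} (hn : 2 ≤ n) :
    F n = 0 := by
  have h2 := h (n - 2) 2 one_le_two
  rw [Nat.sub_add_cancel hn, neg_one_sq, one_smul,
    eq_of_forall_neg_one_pow_smul_add_eq_zero h (by omega : 1 ≤ n), ← two_smul ℂ] at h2
  exact (smul_eq_zero.1 h2).resolve_left two_ne_zero

end NegOnePowRelation

theorem NoMinusPhoton.neg_one_pow_smul_add_eq_zero {E : Type*} [AddCommGroup E] [Module ℂ E]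
    {F G : ℕ → E} (hF : (Function.support F).Finite) (hG : (Function.support G).Finite) {H : E}
    (h : NoMinusPhoton ((∑ᶠ m ∈ Set.Ici 1, ((X 0 : MvPolynomial (Fin 2) ℂ) ^ m) ⊗ₜ[ℂ] F m)
        + (∑ᶠ m ∈ Set.Ici 1, ((X 1 : MvPolynomial (Fin 2) ℂ) ^ m) ⊗ₜ[ℂ] G m)
        + (1 : MvPolynomial (Fin 2) ℂ) ⊗ₜ[ℂ] H))
    {j k : ℕ} (hk : 1 ≤ k) : ((-1 : ℂ) ^ k) • F (j + k) + G (j + k) = 0 := by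
  have hz := h j k hk
  have hvac : Finsupp.single (0 : Fin 2) j + Finsupp.single 1 k ≠ 0 := fun h0 => by
    have : k = 0 := by simpa using DFunLike.congr_fun h0 1
    omega
  rw [map_add, map_add, map_add, map_add,
    Ecoeff_rTensor_finsum_tmul_pow hadamard hadamard_X_zero F hF (by omega),
    Ecoeff_rTensor_finsum_tmul_pow hadamard hadamard_X_one G hG (by omega),
    LinearMap.rTensor_tmul, AlgHom.toLinearMap_apply, map_one, Ecoeff_tmul, coeff_one,
    if_neg hvac.symm, zero_smul, add_zero, one_pow, mul_one, mul_smul, ← smul_add] at hz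
  refine (smul_eq_zero.1 hz).resolve_left ?_
  have hsqrt : ((Real.sqrt 2 : ℂ))⁻¹ ≠ 0 := by simp
  have hchoose : ((j + k).choose j : ℂ) ≠ 0 := by exact_mod_cast (Nat.choose_pos (by omega)).ne'
  exact mul_ne_zero (pow_ne_zero _ hsqrt) hchoose

/-- If `ψ' = Σ_{m ≥ 1} (x^m ⊗ F m + y^m ⊗ G m) + 1 ⊗ H` has zero probability of
a photon in the `|−⟩` mode, then `ψ' = (x + y) ⊗ F 1 + 1 ⊗ H`: a superposition of
a single photon in the `|+⟩` mode (with auxiliary vector `F 1`) and vacuum. -/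
theorem stmt4 {E : Type*} [AddCommGroup E] [Module ℂ E]
    (F G : ℕ → E) (hF : (Function.support F).Finite) (hG : (Function.support G).Finite)
    (H : E) (ψ : MvPolynomial (Fin 2) ℂ ⊗[ℂ] E)
    (hψ : ψ = (∑ᶠ m ∈ Set.Ici 1, ((X 0 : MvPolynomial (Fin 2) ℂ) ^ m) ⊗ₜ[ℂ] F m)
        + (∑ᶠ m ∈ Set.Ici 1, ((X 1 : MvPolynomial (Fin 2) ℂ) ^ m) ⊗ₜ[ℂ] G m)
        + (1 : MvPolynomial (Fin 2) ℂ) ⊗ₜ[ℂ] H)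
    (hzero : NoMinusPhoton ψ) :
    ψ = ((X 0 + X 1 : MvPolynomial (Fin 2) ℂ)) ⊗ₜ[ℂ] F 1
      + (1 : MvPolynomial (Fin 2) ℂ) ⊗ₜ[ℂ] H := by
  subst hψ
  have key : ∀ j k : ℕ, 1 ≤ k → ((-1 : ℂ) ^ k) • F (j + k) + G (j + k) = 0 :=
    fun _ _ => hzero.neg_one_pow_smul_add_eq_zero hF hG
  have hF2 : ∀ m, 2 ≤ m → F m = 0 := fun m => eq_zero_of_forall_neg_one_pow_smul_add_eq_zero key
  have hG2 : ∀ m, 2 ≤ m → G m = 0 := fun m hm => by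
    rw [eq_of_forall_neg_one_pow_smul_add_eq_zero key (by omega), hF2 m hm]
  rw [finsum_mem_Ici_one_tmul_of_eq_zero _ hF2, finsum_mem_Ici_one_tmul_of_eq_zero _ hG2,
    eq_of_forall_neg_one_pow_smul_add_eq_zero key le_rfl, pow_one, pow_one, add_tmul]
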